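/- In a finite attributed static graph, two nodes have the same 1-WL color at refinement iteration j if and only if their unfolding trees of depth j are isomorphic (equal as attributed rooted trees), for every j ≥ 0. -/
import Mathlib


/-- Attributed unfolding trees of depth `d`. -/
def UT (A : Type) : ℕ → Type
  | 0 => A
  | d+1 => A × Multiset (A × UT A d)

/-- A finite attributed undirected graph on node type `V`. -/
structure FinGraph (V A : Type) where
  nbr : V → Finset V
  attr : V → A
  eattr : V → V → A

def FinGraph.Undirected {V A : Type} (g : FinGraph V A) : Prop :=
  (∀ u v, u ∈ g.nbr v ↔ v ∈ g.nbr u) ∧ (∀ u v, g.eattr u v = g.eattr v u)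

/-- Depth-`d` unfolding tree of node `v`. -/
def FinGraph.ut {V A : Type} (g : FinGraph V A) : (d : ℕ) → V → UT A d
  | 0, v => g.attr v
  | d+1, v => (g.attr v, (g.nbr v).val.map fun u => (g.eattr v u, g.ut d u))

/-- 1-WL color refinement with hash functions `h0` and `h`. -/
def FinGraph.wl {V A C : Type} (g : FinGraph V A)
    (h0 : A → C) (h : C × Multiset (A × C) → C) : ℕ → V → C
  | 0, v => h0 (g.attr v)
  | j+1, v => h (g.wl h0 h j v, (g.nbr v).val.map fun u => (g.eattr v u, g.wl h0 h j u))

/-- Truncation of a depth-`d+1` tree to depth `d`. -/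
def UT.trunc {A : Type} : (d : ℕ) → UT A (d+1) → UT A d
  | 0, t => t.1
  | d+1, t => (t.1, t.2.map fun p => (p.1, UT.trunc d p.2))

/-- Hash of an unfolding tree. -/
def UT.hash {A C : Type} (h0 : A → C) (h : C × Multiset (A × C) → C) :
    (d : ℕ) → UT A d → C
  | 0, t => h0 t
  | d+1, t => h (UT.hash h0 h d (UT.trunc d t), t.2.map fun p => (p.1, UT.hash h0 h d p.2))

lemma trunc_ut {V A : Type} (g : FinGraph V A) :
    ∀ d v, UT.trunc d (g.ut (d+1) v) = g.ut d v := by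
  intro d
  induction d with
  | zero => intro v; rfl
  | succ d ih =>
      intro v
      simp only [FinGraph.ut, UT.trunc, Multiset.map_map]
      congr 1
      refine Multiset.map_congr rfl (fun u _ => ?_)
      simp only [Function.comp]
      exact congrArg (fun t => (g.eattr v u, t)) (ih u)

lemma hash_ut {V A C : Type} (g : FinGraph V A)
    (h0 : A → C) (h : C × Multiset (A × C) → C) :
    ∀ d v, UT.hash h0 h d (g.ut d v) = g.wl h0 h d v := by
  intro d
  induction d with
  | zero => intro v; rfl
  | succ d ih =>
      intro v
      have e1 : UT.hash h0 h (d+1) (g.ut (d+1) v)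
          = h (UT.hash h0 h d (UT.trunc d (g.ut (d+1) v)),
              ((g.ut (d+1) v).2).map fun p => (p.1, UT.hash h0 h d p.2)) := rfl
      rw [e1, trunc_ut, ih]
      simp only [FinGraph.wl]
      congr 1
      refine Prod.ext rfl ?_
      show ((g.nbr v).val.map fun u => (g.eattr v u, g.ut d u)).map
          (fun p => (p.1, UT.hash h0 h d p.2)) = _
      rw [Multiset.map_map]
      refine Multiset.map_congr rfl (fun u _ => ?_)
      simp only [Function.comp]
      exact congrArg (fun t => (g.eattr v u, t)) (ih u)

lemma hash_inj {A C : Type} (h0 : A → C) (h : C × Multiset (A × C) → C)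
    (h0inj : Function.Injective h0) (hinj : Function.Injective h) :
    ∀ d, Function.Injective (UT.hash h0 h d) := by
  intro d
  induction d with
  | zero => exact h0inj
  | succ d ih =>
      intro t1 t2 ht
      have := hinj ht
      have h1 : UT.trunc d t1 = UT.trunc d t2 := ih (congrArg Prod.fst this)
      have h2 : t1.2.map (fun p => (p.1, UT.hash h0 h d p.2))
          = t2.2.map (fun p => (p.1, UT.hash h0 h d p.2)) := congrArg Prod.snd this
      have hfinj : Function.Injective (fun p : A × UT A d => (p.1, UT.hash h0 h d p.2)) := by
        intro p q hpq
        have hpq' : (p.1, UT.hash h0 h d p.2) = (q.1, UT.hash h0 h d q.2) := hpq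
        have h1 : p.1 = q.1 := congrArg (Prod.fst : A × C → A) hpq'
        have h2 : p.2 = q.2 := ih (congrArg (Prod.snd : A × C → C) hpq')
        exact Prod.ext h1 h2
      have hsnd : t1.2 = t2.2 := Multiset.map_injective hfinj h2
      have hfst : t1.1 = t2.1 := by
        cases d with
        | zero => exact h1
        | succ d =>
            exact congrArg (Prod.fst : A × Multiset (A × UT A d) → A) h1
      exact Prod.ext hfst hsnd

/-- In a finite attributed static graph, two nodes have the same 1-WL color at
iteration `j` iff their depth-`j` unfolding trees are equal, for every `j ≥ 0`. -/
theorem wl_color_eq_iff_ut_eq {V A C : Type} (g : FinGraph V A) (hg : g.Undirected)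
    (h0 : A → C) (h : C × Multiset (A × C) → C)
    (h0inj : Function.Injective h0) (hinj : Function.Injective h)
    (x y : V) :
    ∀ j : ℕ, g.wl h0 h j x = g.wl h0 h j y ↔ g.ut j x = g.ut j y := by
  intro j
  rw [← hash_ut g h0 h j x, ← hash_ut g h0 h j y]
  exact ⟨fun hh => hash_inj h0 h h0inj hinj j hh, fun hh => congrArg _ hh⟩
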